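/- For all positive integers n and l, the set S(T_2) of valences of type-T_2 super edge-magic labelings of K_{1,n} ∪ lK_1 consists of consecutive integers: whenever k_1, k_2 ∈ S(T_2) and k is an integer with k_1 ≤ k ≤ k_2, then k ∈ S(T_2). -/

import Mathlib

/-!
In a super edge-magic labeling `f` of `K_{1,n} ∪ lK_1` with valence `k`, the `n` edges carry
the labels `p + 1, …, p + n` (where `p = n + l + 1`), and the leaf under the edge labeled `t`
has label `k - f x - t`. At `t = p + n` this label is at least `1`, and at `t = p + 1` it is
below `f x ≤ p` (type `T₂`); hence `p + 2n + 2 ≤ k ≤ 3p`. Conversely, each such `k` is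
`a + c + p + n` with `1 ≤ a` and `a + n ≤ c ≤ p`: label the center `c`, the leaves
`a, …, a + n - 1`, the isolated vertices with the remaining vertex labels, and each edge with
the label the valence forces. So `S(T₂)` is the interval `[p + 2n + 2, 3p]`.
-/

/-- `f` is an edge-magic labeling of the graph `G` with valence `k`:
`f` is a bijection from `V(G) ∪ E(G)` onto `{1, …, p + q}` and
`f u + f v + f uv = k` for every edge `uv`. -/
def IsEdgeMagic {V : Type*} [Fintype V] (G : SimpleGraph V)
    (f : V ⊕ G.edgeSet → ℕ) (k : ℕ) : Prop :=
  Set.BijOn f Set.univ (Set.Icc 1 (Fintype.card V + G.edgeSet.ncard)) ∧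
  ∀ u v, ∀ h : G.Adj u v,
    f (Sum.inl u) + f (Sum.inl v) + f (Sum.inr ⟨s(u, v), G.mem_edgeSet.mpr h⟩) = k

/-- `f` is a super edge-magic labeling of `G` with valence `k`: an edge-magic
labeling whose vertex labels are exactly `{1, …, p}`. -/
def IsSuperEdgeMagic {V : Type*} [Fintype V] (G : SimpleGraph V)
    (f : V ⊕ G.edgeSet → ℕ) (k : ℕ) : Prop :=
  IsEdgeMagic G f k ∧ ∀ v, f (Sum.inl v) ∈ Set.Icc 1 (Fintype.card V)

/-- The graph `K_{1,n} ∪ lK_1`: the disjoint union of the star `K_{1,n}`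
(with center `0` and leaves `1, …, n`) and `l` isolated vertices
(`n+1, …, n+l`), on `n + l + 1` vertices. -/
def starUnion (n l : ℕ) : SimpleGraph (Fin (n + l + 1)) where
  Adj u v := (u = 0 ∧ v ≠ 0 ∧ (v : ℕ) ≤ n) ∨ (v = 0 ∧ u ≠ 0 ∧ (u : ℕ) ≤ n)
  symm := ⟨fun u v h => h.symm⟩
  loopless := ⟨fun v h => by rcases h with ⟨h1, h2, _⟩ | ⟨h1, h2, _⟩ <;> exact h2 h1⟩

open Set

lemma Set.MapsTo.bijOn_of_injOn_of_ncard_le {α β : Type*} {f : α → β} {s : Set α} {t : Set β}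
    (hf : MapsTo f s t) (hinj : InjOn f s) (ht : t.Finite) (hts : t.ncard ≤ s.ncard) :
    BijOn f s t := by
  refine ⟨hf, hinj, ?_⟩
  rw [SurjOn, ← eq_of_subset_of_ncard_le hf.image_subset (by rwa [hinj.ncard_image]) ht]

lemma Set.BijOn.sumElim {α β γ : Type*} {f : α → γ} {g : β → γ} {s t : Set γ}
    (hf : BijOn f univ s) (hg : BijOn g univ t) (hst : Disjoint s t) :
    BijOn (Sum.elim f g) univ (s ∪ t) := by
  refine ⟨?_, ?_, ?_⟩
  · rintro (a | b) -
    exacts [Or.inl (hf.mapsTo trivial), Or.inr (hg.mapsTo trivial)]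
  · rintro (a | b) - (a' | b') - h
    · exact congrArg Sum.inl (hf.injOn trivial trivial h)
    · exact (hst.ne_of_mem (hf.mapsTo trivial) (hg.mapsTo trivial) h).elim
    · exact (hst.ne_of_mem (hf.mapsTo trivial) (hg.mapsTo trivial) h.symm).elim
    · exact congrArg Sum.inr (hg.injOn trivial trivial h)
  · rintro x (hx | hx)
    · obtain ⟨a, -, rfl⟩ := hf.surjOn hx
      exact ⟨Sum.inl a, trivial, rfl⟩
    · obtain ⟨b, -, rfl⟩ := hg.surjOn hx
      exact ⟨Sum.inr b, trivial, rfl⟩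

section EdgeMagic

variable {V : Type*} {G : SimpleGraph V}

def edgeSum (g : V → ℕ) : Sym2 V → ℕ :=
  Sym2.lift ⟨fun u v => g u + g v, fun _ _ => Nat.add_comm _ _⟩

@[simp]
lemma edgeSum_mk (g : V → ℕ) (u v : V) : edgeSum g s(u, v) = g u + g v := rfl

variable (G) in
def labelingOfValence (g : V → ℕ) (k : ℕ) : V ⊕ G.edgeSet → ℕ :=
  Sum.elim g fun e => k - edgeSum g e

theorem isSuperEdgeMagic_labelingOfValence [Fintype V] {g : V → ℕ} {k : ℕ}
    (hg : BijOn g univ (Icc 1 (Fintype.card V))) (hs : InjOn (edgeSum g) G.edgeSet)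
    (hk : ∀ e ∈ G.edgeSet, Fintype.card V + 1 + edgeSum g e ≤ k ∧
      k ≤ Fintype.card V + G.edgeSet.ncard + edgeSum g e) :
    IsSuperEdgeMagic G (labelingOfValence G g k) k := by
  set p := Fintype.card V
  set q := G.edgeSet.ncard
  have hedges : BijOn (fun e : G.edgeSet => k - edgeSum g e) univ (Icc (p + 1) (p + q)) := by
    refine MapsTo.bijOn_of_injOn_of_ncard_le (fun e _ => ?_) (fun e _ e' _ h => ?_)
      (finite_Icc _ _) ?_
    · have := hk e e.2
      exact ⟨by omega, by omega⟩
    · have := hk e e.2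
      have := hk e' e'.2
      exact Subtype.ext (hs e.2 e'.2 (by omega))
    · rw [ncard_univ, Nat.card_coe_set_eq, ← Finset.coe_Icc, ncard_coe_finset, Nat.card_Icc]
      omega
  have hlabels : Icc 1 p ∪ Icc (p + 1) (p + q) = Icc 1 (p + q) := by
    ext t
    simp only [mem_union, mem_Icc]
    omega
  refine ⟨⟨?_, fun u v h => ?_⟩, fun v => hg.mapsTo trivial⟩
  · rw [← hlabels]
    refine hg.sumElim hedges (disjoint_left.mpr fun t ht ht' => ?_)
    simp only [mem_Icc] at ht ht'
    omega
  · have := hk _ (G.mem_edgeSet.mpr h)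
    simp only [labelingOfValence, Sum.elim_inl, Sum.elim_inr, edgeSum_mk] at this ⊢
    omega

lemma IsSuperEdgeMagic.exists_edge_label_eq [Fintype V] {f : V ⊕ G.edgeSet → ℕ} {k t : ℕ}
    (hf : IsSuperEdgeMagic G f k) (ht : Fintype.card V < t)
    (ht' : t ≤ Fintype.card V + G.edgeSet.ncard) : ∃ e : G.edgeSet, f (Sum.inr e) = t := by
  obtain ⟨x | e, -, hx⟩ := hf.1.1.surjOn (show t ∈ Icc 1 _ from ⟨by omega, ht'⟩)
  · exact absurd (hf.2 x).2 (by omega)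
  · exact ⟨e, hx⟩

end EdgeMagic

section StarUnion

variable {n l : ℕ}

lemma starUnion_mem_edgeSet_iff {e : Sym2 (Fin (n + l + 1))} :
    e ∈ (starUnion n l).edgeSet ↔ ∃ v : Fin (n + l + 1), v ≠ 0 ∧ (v : ℕ) ≤ n ∧ e = s(0, v) := by
  induction e using Sym2.ind with
  | _ a b =>
    simp only [SimpleGraph.mem_edgeSet, starUnion]
    constructor
    · rintro (⟨rfl, hb, hbn⟩ | ⟨rfl, ha, han⟩)
      exacts [⟨b, hb, hbn, rfl⟩, ⟨a, ha, han, Sym2.eq_swap⟩]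
    · rintro ⟨v, hv, hvn, h⟩
      rcases Sym2.eq_iff.mp h with ⟨rfl, rfl⟩ | ⟨rfl, rfl⟩
      exacts [Or.inl ⟨rfl, hv, hvn⟩, Or.inr ⟨rfl, hv, hvn⟩]

lemma starUnion_edgeSet_ncard : (starUnion n l).edgeSet.ncard = n := by
  have hedges : (starUnion n l).edgeSet =
      (fun v => s(0, v)) '' {v : Fin (n + l + 1) | v ≠ 0 ∧ (v : ℕ) ≤ n} := by
    ext e
    simp only [starUnion_mem_edgeSet_iff, mem_image, mem_ofPred_eq, and_assoc, eq_comm]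
  have hleaves : Fin.val '' {v : Fin (n + l + 1) | v ≠ 0 ∧ (v : ℕ) ≤ n} = Icc 1 n := by
    ext m
    simp only [mem_image, mem_ofPred_eq, mem_Icc, ← Fin.val_ne_zero_iff]
    constructor
    · rintro ⟨v, ⟨hv, hvn⟩, rfl⟩
      omega
    · rintro ⟨hm, hmn⟩
      exact ⟨⟨m, by omega⟩, ⟨Nat.pos_iff_ne_zero.mp hm, hmn⟩, rfl⟩
  rw [hedges, ncard_image_of_injective _ fun _ _ => Sym2.congr_right.mp,
    ← ncard_image_of_injective _ Fin.val_injective, hleaves, ← Finset.coe_Icc,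
    ncard_coe_finset, Nat.card_Icc, Nat.add_sub_cancel]

def typeT2Valences (n l : ℕ) : Set ℕ :=
  {k | ∃ f, IsSuperEdgeMagic (starUnion n l) f k ∧
    ∀ v : Fin (n + l + 1), v ≠ 0 → (v : ℕ) ≤ n → f (Sum.inl v) < f (Sum.inl 0)}

lemma IsSuperEdgeMagic.exists_starUnion_leaf
    {f : Fin (n + l + 1) ⊕ (starUnion n l).edgeSet → ℕ} {k t : ℕ}
    (hf : IsSuperEdgeMagic (starUnion n l) f k) (ht : n + l + 1 < t) (ht' : t ≤ n + l + 1 + n) :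
    ∃ v : Fin (n + l + 1), v ≠ 0 ∧ (v : ℕ) ≤ n ∧ f (Sum.inl 0) + f (Sum.inl v) + t = k := by
  obtain ⟨⟨e, he⟩, hft⟩ := hf.exists_edge_label_eq (t := t) (by simpa using ht)
    (by simpa [starUnion_edgeSet_ncard] using ht')
  obtain ⟨v, hv, hvn, rfl⟩ := starUnion_mem_edgeSet_iff.mp he
  exact ⟨v, hv, hvn, hft ▸ hf.1.2 0 v (Or.inl ⟨rfl, hv, hvn⟩)⟩

lemma typeT2Valences_subset_Icc (hn : 1 ≤ n) :
    typeT2Valences n l ⊆ Icc (n + l + 1 + 2 * n + 2) (3 * (n + l + 1)) := by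
  rintro k ⟨f, hf, hcenter⟩
  obtain ⟨v, hv, hvn, hkv⟩ := hf.exists_starUnion_leaf (t := n + l + 1 + n) (by omega) le_rfl
  obtain ⟨w, hw, hwn, hkw⟩ := hf.exists_starUnion_leaf (t := n + l + 1 + 1) (by omega) (by omega)
  have hfv := hf.2 v
  have hf0 := hf.2 0
  have hfw := hcenter w hw hwn
  simp only [Fintype.card_fin, mem_Icc] at hfv hf0 ⊢
  omega

/-- Center `c`, leaves `a, …, a + n - 1`, and the isolated vertices `n + 1, …, n + l` get the
remaining labels of `{1, …, n + l + 1}` in increasing order. -/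
def starLabel (n a c v : ℕ) : ℕ :=
  if v = 0 then c
  else if v ≤ n then a + v - 1
  else if v - n < a then v - n
  else if v < c then v
  else v + 1

lemma starLabel_bijOn {a c : ℕ} (ha : 1 ≤ a) (hac : a + n ≤ c) (hc : c ≤ n + l + 1) :
    BijOn (fun v : Fin (n + l + 1) => starLabel n a c v) univ (Icc 1 (n + l + 1)) := by
  refine MapsTo.bijOn_of_injOn_of_ncard_le (fun v _ => ?_) (fun v _ w _ h => Fin.ext ?_)
    (finite_Icc _ _) ?_
  · have := v.isLt
    rw [mem_Icc, starLabel]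
    split_ifs <;> omega
  · have := v.isLt
    have := w.isLt
    simp only [starLabel] at h
    split_ifs at h <;> omega
  · rw [ncard_univ, Nat.card_eq_fintype_card, Fintype.card_fin, ← Finset.coe_Icc,
      ncard_coe_finset, Nat.card_Icc, Nat.add_sub_cancel]

lemma add_mem_typeT2Valences {a c : ℕ} (ha : 1 ≤ a) (hac : a + n ≤ c) (hc : c ≤ n + l + 1) :
    a + c + (n + l + 1) + n ∈ typeT2Valences n l := by
  set g := fun v : Fin (n + l + 1) => starLabel n a c v
  have hg : BijOn g univ (Icc 1 (n + l + 1)) := starLabel_bijOn ha hac hc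
  have hcenter : g 0 = c := by simp [g, starLabel]
  have hleaf : ∀ v : Fin (n + l + 1), v ≠ 0 → (v : ℕ) ≤ n → g v = a + v - 1 := by
    intro v hv hvn
    simp [g, starLabel, hv, hvn]
  refine ⟨labelingOfValence _ g _, isSuperEdgeMagic_labelingOfValence (by simpa using hg) ?_ ?_,
    fun v hv hvn => ?_⟩
  · rintro _ he _ he' h
    obtain ⟨v, -, -, rfl⟩ := starUnion_mem_edgeSet_iff.mp he
    obtain ⟨w, -, -, rfl⟩ := starUnion_mem_edgeSet_iff.mp he'
    rw [edgeSum_mk, edgeSum_mk, Nat.add_left_cancel_iff] at h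
    rw [hg.injOn trivial trivial h]
  · rintro _ he
    obtain ⟨v, hv, hvn, rfl⟩ := starUnion_mem_edgeSet_iff.mp he
    rw [edgeSum_mk, hcenter, hleaf v hv hvn, Fintype.card_fin, starUnion_edgeSet_ncard]
    have := Fin.val_ne_zero_iff.mpr hv
    omega
  · show g v < g 0
    rw [hcenter, hleaf v hv hvn]
    omega

lemma Icc_subset_typeT2Valences :
    Icc (n + l + 1 + 2 * n + 2) (3 * (n + l + 1)) ⊆ typeT2Valences n l := by
  rintro k ⟨hk₁, hk₂⟩
  obtain ⟨a, c, ha, hac, hc, rfl⟩ : ∃ a c, 1 ≤ a ∧ a + n ≤ c ∧ c ≤ n + l + 1 ∧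
      k = a + c + (n + l + 1) + n := by
    by_cases hk : k ≤ 2 * (n + l + 1) + n + 1
    · exact ⟨1, k - (n + l + 1) - n - 1, by omega, by omega, by omega, by omega⟩
    · exact ⟨k - 2 * (n + l + 1) - n, n + l + 1, by omega, by omega, by omega, by omega⟩
  exact add_mem_typeT2Valences ha hac hc

theorem typeT2Valences_eq (hn : 1 ≤ n) :
    typeT2Valences n l = Icc (n + l + 1 + 2 * n + 2) (3 * (n + l + 1)) :=
  (typeT2Valences_subset_Icc hn).antisymm Icc_subset_typeT2Valences

end StarUnion

theorem stmt_15_general (n l : ℕ) (hn : 1 ≤ n) :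
    ∀ k₁ k₂ k : ℕ,
      (∃ f, IsSuperEdgeMagic (starUnion n l) f k₁ ∧
        ∀ v : Fin (n + l + 1), v ≠ 0 → (v : ℕ) ≤ n →
          f (Sum.inl v) < f (Sum.inl 0)) →
      (∃ f, IsSuperEdgeMagic (starUnion n l) f k₂ ∧
        ∀ v : Fin (n + l + 1), v ≠ 0 → (v : ℕ) ≤ n →
          f (Sum.inl v) < f (Sum.inl 0)) →
      k₁ ≤ k → k ≤ k₂ →
      ∃ f, IsSuperEdgeMagic (starUnion n l) f k ∧
        ∀ v : Fin (n + l + 1), v ≠ 0 → (v : ℕ) ≤ n →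
          f (Sum.inl v) < f (Sum.inl 0) := by
  intro k₁ k₂ k h₁ h₂ hk₁ hk₂
  have hS : (typeT2Valences n l).OrdConnected := typeT2Valences_eq hn ▸ ordConnected_Icc
  exact hS.out h₁ h₂ ⟨hk₁, hk₂⟩

/-- For all positive integers `n` and `l`, the set `S(T₂)` of valences of
type-`T₂` super edge-magic labelings of `K_{1,n} ∪ lK_1` (those with the
center label larger than all leaf labels) consists of consecutive integers:
whenever `k₁, k₂ ∈ S(T₂)` and `k₁ ≤ k ≤ k₂`, also `k ∈ S(T₂)`. -/
theorem stmt_15 (n l : ℕ) (hn : 1 ≤ n) (hl : 1 ≤ l) :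
    ∀ k₁ k₂ k : ℕ,
      (∃ f, IsSuperEdgeMagic (starUnion n l) f k₁ ∧
        ∀ v : Fin (n + l + 1), v ≠ 0 → (v : ℕ) ≤ n →
          f (Sum.inl v) < f (Sum.inl 0)) →
      (∃ f, IsSuperEdgeMagic (starUnion n l) f k₂ ∧
        ∀ v : Fin (n + l + 1), v ≠ 0 → (v : ℕ) ≤ n →
          f (Sum.inl v) < f (Sum.inl 0)) →
      k₁ ≤ k → k ≤ k₂ →
      ∃ f, IsSuperEdgeMagic (starUnion n l) f k ∧
        ∀ v : Fin (n + l + 1), v ≠ 0 → (v : ℕ) ≤ n →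
          f (Sum.inl v) < f (Sum.inl 0) :=
  stmt_15_general n l hn
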